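/- arXiv:1010.3497 — 3 statements merged into one kernel-verified Lean document; each statement's English description precedes it below -/
import Mathlib

section
/- The second-order operator R := D_xx + x·D_xy + D_x + (2+x)·D_y is irreducible: there do not exist smooth functions a, b : ℝ² → ℝ such that R = (D_x + a) ∘ (D_x + x·D_y + b), and there do not exist smooth functions a, b : ℝ² → ℝ such that R = (D_x + x·D_y + a) ∘ (D_x + b), as operators on smooth functions ℝ² → ℝ. -/
/-- Operators act on functions `ℝ × ℝ → ℝ`. -/
abbrev Fn := ℝ × ℝ → ℝ

/-- Partial derivative in the first coordinate direction. -/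
noncomputable def Dx (u : Fn) : Fn := fun p => fderiv ℝ u p (1, 0)

/-- Partial derivative in the second coordinate direction. -/
noncomputable def Dy (u : Fn) : Fn := fun p => fderiv ℝ u p (0, 1)

/-- The first coordinate function `x`. -/
def xf : Fn := fun p => p.1

/-- The second coordinate function `y`. -/
def yf : Fn := fun p => p.2

/-- Smoothness of a function `ℝ × ℝ → ℝ`. -/
def IsSmooth (u : Fn) : Prop := ContDiff ℝ (⊤ : ℕ∞) u

/-- The second-order operator `R = D_xx + x·D_xy + D_x + (2+x)·D_y`. -/
noncomputable def Rop (u : Fn) : Fn :=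
  Dx (Dx u) + xf * Dx (Dy u) + Dx u + (2 + xf) * Dy u

lemma yf_smooth : IsSmooth yf := contDiff_snd

lemma fd_yf (p : ℝ × ℝ) : fderiv ℝ yf p = ContinuousLinearMap.snd ℝ ℝ ℝ :=
  hasFDerivAt_snd.fderiv

lemma Dx_yf : Dx yf = 0 := by
  funext p; simp [Dx, fd_yf]

lemma Dy_yf : Dy yf = fun _ => 1 := by
  funext p; simp [Dy, fd_yf]

lemma Rop_yf : Rop yf 0 = 2 := by
  simp [Rop, Dx_yf, Dy_yf, Dx, xf, Pi.add_apply, Pi.mul_apply, fderiv_const]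

lemma Dx_fst_add_mul_snd (b : Fn) (hb : IsSmooth b) :
    Dx (fun p => p.1 + b p * p.2) 0 = 1 := by
  have hb' : HasFDerivAt b (fderiv ℝ b 0) (0 : ℝ × ℝ) :=
    (hb.differentiable (by simp) 0).hasFDerivAt
  have h : HasFDerivAt (fun p : ℝ × ℝ => p.1 + b p * p.2)
      (ContinuousLinearMap.fst ℝ ℝ ℝ +
        (b 0 • ContinuousLinearMap.snd ℝ ℝ ℝ + ((0 : ℝ × ℝ)).2 • fderiv ℝ b 0))
      (0 : ℝ × ℝ) :=
    hasFDerivAt_fst.add (hb'.mul hasFDerivAt_snd)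
  simp [Dx, h.fderiv]

lemma Dx_mul_snd (b : Fn) (hb : IsSmooth b) :
    Dx (fun p => b p * p.2) 0 = 0 := by
  have hb' : HasFDerivAt b (fderiv ℝ b 0) (0 : ℝ × ℝ) :=
    (hb.differentiable (by simp) 0).hasFDerivAt
  have h : HasFDerivAt (fun p : ℝ × ℝ => b p * p.2)
      (b 0 • ContinuousLinearMap.snd ℝ ℝ ℝ + ((0 : ℝ × ℝ)).2 • fderiv ℝ b 0)
      (0 : ℝ × ℝ) := hb'.mul hasFDerivAt_snd
  simp [Dx, h.fderiv]


/-- The operator `R = D_xx + x·D_xy + D_x + (2+x)·D_y` is irreducible: it has no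
factorization `(D_x + a) ∘ (D_x + x·D_y + b)` and no factorization
`(D_x + x·D_y + a) ∘ (D_x + b)` with smooth `a, b`. -/
theorem Rop_irreducible :
    (¬ ∃ a b : Fn, IsSmooth a ∧ IsSmooth b ∧
      ∀ u : Fn, IsSmooth u →
        Rop u = (fun v => Dx v + a * v) ((fun v => Dx v + xf * Dy v + b * v) u)) ∧
    (¬ ∃ a b : Fn, IsSmooth a ∧ IsSmooth b ∧
      ∀ u : Fn, IsSmooth u →
        Rop u = (fun v => Dx v + xf * Dy v + a * v) ((fun v => Dx v + b * v) u)) := by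
  constructor
  · rintro ⟨a, b, _, hb, h⟩
    have h1 := congrFun (h yf yf_smooth) 0
    have hV : (Dx yf + xf * Dy yf + b * yf) = fun p => p.1 + b p * p.2 := by
      funext p; simp [Dx_yf, Dy_yf, xf, yf, Pi.add_apply, Pi.mul_apply, mul_comm]
    dsimp only at h1
    rw [Rop_yf, hV] at h1
    simp only [Pi.add_apply, Pi.mul_apply] at h1
    rw [Dx_fst_add_mul_snd b hb] at h1
    simp [yf, Pi.add_apply, Pi.mul_apply] at h1
  · rintro ⟨a, b, _, hb, h⟩
    have h1 := congrFun (h yf yf_smooth) 0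
    have hV : (Dx yf + b * yf) = fun p => b p * p.2 := by
      funext p; simp [Dx_yf, yf, Pi.add_apply, Pi.mul_apply]
    dsimp only at h1
    rw [Rop_yf, hV] at h1
    simp only [Pi.add_apply, Pi.mul_apply] at h1
    rw [Dx_mul_snd b hb] at h1
    simp [yf, xf, Pi.add_apply, Pi.mul_apply] at h1
end

section
/- The third-order operator A₃ := D_xxy + D_xyy + (x−y)·D_x + (x−y)·D_y has no factorization into three first-order factors: there do not exist smooth functions a, b, c : ℝ² → ℝ and an ordering (P₁, P₂, P₃) of the three operators D_x, D_y, D_x + D_y such that A₃ = (P₁ + a) ∘ (P₂ + b) ∘ (P₃ + c) as operators on smooth functions ℝ² → ℝ. -/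
/-- The operator `A₃ = D_xxy + D_xyy + (x−y)·D_x + (x−y)·D_y`. -/
noncomputable def A3 (u : Fn) : Fn :=
  Dx (Dx (Dy u)) + Dx (Dy (Dy u)) + (xf - yf) * Dx u + (xf - yf) * Dy u

noncomputable def dd (v : ℝ × ℝ) (u : Fn) : Fn := fun p => fderiv ℝ u p v

lemma diff_of {u : Fn} (hu : IsSmooth u) : Differentiable ℝ u :=
  hu.differentiable (by simp)

lemma smaddF {u w : Fn} (hu : IsSmooth u) (hw : IsSmooth w) : IsSmooth (u + w) :=
  ContDiff.add hu hw

lemma smmulF {u w : Fn} (hu : IsSmooth u) (hw : IsSmooth w) : IsSmooth (u * w) :=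
  ContDiff.mul hu hw

lemma isSmooth_dd (v : ℝ × ℝ) {u : Fn} (hu : IsSmooth u) : IsSmooth (dd v u) :=
  (hu.fderiv_right (le_refl _)).clm_apply contDiff_const

lemma dd_add (v : ℝ × ℝ) {f g : Fn} (hf : Differentiable ℝ f) (hg : Differentiable ℝ g) :
    dd v (f + g) = dd v f + dd v g := by
  funext p
  simp [dd, fderiv_add (hf p) (hg p)]

lemma dd_mul (v : ℝ × ℝ) {f g : Fn} (hf : Differentiable ℝ f) (hg : Differentiable ℝ g) :
    dd v (f * g) = dd v f * g + f * dd v g := by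
  funext p
  have : fderiv ℝ (fun y => f y * g y) p = f p • fderiv ℝ g p + g p • fderiv ℝ f p :=
    fderiv_mul (x := p) (hf p) (hg p)
  simp only [dd, Pi.mul_def, Pi.add_def, this, ContinuousLinearMap.add_apply,
    ContinuousLinearMap.coe_smul', Pi.smul_apply, smul_eq_mul]
  ring

lemma dd_const (v : ℝ × ℝ) (k : ℝ) : dd v (fun _ => k) = 0 := by
  funext p; simp [dd]

/-- The composed operator with symbols `v₁, v₂, v₃` and lower-order coefficients `a, b, c`. -/
noncomputable def EE (v₁ v₂ v₃ : ℝ × ℝ) (a b c : Fn) (u : Fn) : Fn :=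
  dd v₁ (dd v₂ (dd v₃ u + c * u) + b * (dd v₃ u + c * u)) +
    a * (dd v₂ (dd v₃ u + c * u) + b * (dd v₃ u + c * u))

section Quad

variable {v₁ v₂ v₃ : ℝ × ℝ} {a b c f g : Fn} {F G : (ℝ × ℝ) →L[ℝ] ℝ} {p : ℝ × ℝ}

lemma EE_quad (ha : IsSmooth a) (hb : IsSmooth b) (hc : IsSmooth c)
    (hfs : IsSmooth f) (hgs : IsSmooth g)
    (hfd : ∀ r, fderiv ℝ f r = F) (hgd : ∀ r, fderiv ℝ g r = G)
    (hfp : f p = 0) (hgp : g p = 0) :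
    EE v₁ v₂ v₃ a b c (f * g) p =
      c p * (F v₁ * G v₂ + F v₂ * G v₁) + b p * (F v₁ * G v₃ + F v₃ * G v₁)
        + a p * (F v₂ * G v₃ + F v₃ * G v₂) := by
  set Q : Fn := f * g with hQ
  have hQs : IsSmooth Q := smmulF hfs hgs
  have hQd : ∀ v r, dd v Q r = F v * g r + f r * G v := by
    intro v r
    have h := fderiv_fun_mul (𝕜 := ℝ) (x := r) ((diff_of hfs) r) ((diff_of hgs) r)
    show fderiv ℝ Q r v = _
    rw [show Q = fun y => f y * g y from rfl, h, hfd, hgd]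
    simp; ring
  have hQd' : ∀ v, dd v Q = fun r => F v * g r + f r * G v := fun v => funext (hQd v)
  have hQdd : ∀ v w, dd w (dd v Q) = fun _ => F v * G w + F w * G v := by
    intro v w
    rw [hQd' v]
    funext r
    have h1 : HasFDerivAt (fun r => F v * g r + f r * G v)
        ((F v) • G + (G v) • F) r := by
      have hg1 : HasFDerivAt g G r := by
        have := ((diff_of hgs) r).hasFDerivAt; rwa [hgd r] at this
      have hf1 : HasFDerivAt f F r := by
        have := ((diff_of hfs) r).hasFDerivAt; rwa [hfd r] at this
      exact (hg1.const_mul (F v)).add (hf1.mul_const (G v))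
    simp only [dd, h1.fderiv, ContinuousLinearMap.add_apply,
      ContinuousLinearMap.coe_smul', Pi.smul_apply, smul_eq_mul]
    ring
  have hQp : Q p = 0 := by simp [hQ, hfp, hgp]
  have hQdp : ∀ v, dd v Q p = 0 := by intro v; rw [hQd v]; simp [hfp, hgp]
  set w3 : Fn := dd v₃ Q + c * Q with hw3
  have hw3s : IsSmooth w3 := smaddF (isSmooth_dd _ hQs) (smmulF hc hQs)
  have hw3p : w3 p = 0 := by simp [hw3, hQdp, hQp]
  have hdw3 : ∀ v, dd v w3 = (fun _ => F v₃ * G v + F v * G v₃) + (dd v c * Q + c * dd v Q) := by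
    intro v
    rw [hw3, dd_add v (diff_of (isSmooth_dd _ hQs)) (diff_of (smmulF hc hQs)),
      dd_mul v (diff_of hc) (diff_of hQs), hQdd v₃ v]
  have hdw3p : ∀ v, dd v w3 p = F v₃ * G v + F v * G v₃ := by
    intro v
    rw [hdw3 v]
    simp [hQp, hQdp]
  set w2 : Fn := dd v₂ w3 + b * w3 with hw2
  have hw2p : w2 p = F v₃ * G v₂ + F v₂ * G v₃ := by
    simp [hw2, hdw3p v₂, hw3p]
  have hd2 : dd v₁ (dd v₂ w3) p = c p * (F v₂ * G v₁ + F v₁ * G v₂) := by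
    rw [hdw3 v₂]
    have h1 : Differentiable ℝ (fun _ : ℝ × ℝ => F v₃ * G v₂ + F v₂ * G v₃) :=
      differentiable_const _
    have h2 : IsSmooth (dd v₂ c * Q) := smmulF (isSmooth_dd _ hc) hQs
    have h3 : IsSmooth (c * dd v₂ Q) := smmulF hc (isSmooth_dd _ hQs)
    rw [dd_add v₁ h1 (diff_of (smaddF h2 h3)), dd_add v₁ (diff_of h2) (diff_of h3),
      dd_mul v₁ (diff_of (isSmooth_dd _ hc)) (diff_of hQs),
      dd_mul v₁ (diff_of hc) (diff_of (isSmooth_dd _ hQs)), hQdd v₂ v₁]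
    have h4 : dd v₁ (fun _ : ℝ × ℝ => F v₃ * G v₂ + F v₂ * G v₃) = 0 := dd_const _ _
    simp [h4, hQp, hQdp]
  have hd1 : dd v₁ (b * w3) p = b p * (F v₃ * G v₁ + F v₁ * G v₃) := by
    rw [dd_mul v₁ (diff_of hb) (diff_of hw3s)]
    simp [hw3p, hdw3p v₁]
  have hEE : EE v₁ v₂ v₃ a b c Q p = dd v₁ w2 p + a p * w2 p := rfl
  rw [hEE, hw2, dd_add v₁ (diff_of (isSmooth_dd _ hw3s)) (diff_of (smmulF hb hw3s))]
  simp only [Pi.add_apply]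
  rw [hd2, hd1]
  simp only [Pi.add_apply, Pi.mul_apply, hdw3p, hw3p]
  ring

lemma A3_quad (hfs : IsSmooth f) (hgs : IsSmooth g)
    (hfd : ∀ r, fderiv ℝ f r = F) (hgd : ∀ r, fderiv ℝ g r = G)
    (hfp : f p = 0) (hgp : g p = 0) :
    A3 (f * g) p = 0 := by
  set Q : Fn := f * g with hQ
  have hQs : IsSmooth Q := smmulF hfs hgs
  have hQd : ∀ v r, dd v Q r = F v * g r + f r * G v := by
    intro v r
    have h := fderiv_fun_mul (𝕜 := ℝ) (x := r) ((diff_of hfs) r) ((diff_of hgs) r)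
    show fderiv ℝ Q r v = _
    rw [show Q = fun y => f y * g y from rfl, h, hfd, hgd]
    simp; ring
  have hQd' : ∀ v, dd v Q = fun r => F v * g r + f r * G v := fun v => funext (hQd v)
  have hQdd : ∀ v w, dd w (dd v Q) = fun _ => F v * G w + F w * G v := by
    intro v w
    rw [hQd' v]
    funext r
    have h1 : HasFDerivAt (fun r => F v * g r + f r * G v)
        ((F v) • G + (G v) • F) r := by
      have hg1 : HasFDerivAt g G r := by
        have := ((diff_of hgs) r).hasFDerivAt; rwa [hgd r] at this
      have hf1 : HasFDerivAt f F r := by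
        have := ((diff_of hfs) r).hasFDerivAt; rwa [hfd r] at this
      exact (hg1.const_mul (F v)).add (hf1.mul_const (G v))
    simp only [dd, h1.fderiv, ContinuousLinearMap.add_apply,
      ContinuousLinearMap.coe_smul', Pi.smul_apply, smul_eq_mul]
    ring
  have hQdp : ∀ v, dd v Q p = 0 := by intro v; rw [hQd v]; simp [hfp, hgp]
  show Dx (Dx (Dy Q)) p + Dx (Dy (Dy Q)) p + (xf - yf) p * Dx Q p
      + (xf - yf) p * Dy Q p = 0
  simp only [show ∀ u : Fn, Dx u = dd (1,0) u from fun _ => rfl,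
    show ∀ u : Fn, Dy u = dd (0,1) u from fun _ => rfl]
  rw [hQdd (0,1) (0,1), hQdd (0,1) (1,0), dd_const, dd_const, hQdp, hQdp]
  simp

end Quad

lemma dd_zero (v : ℝ × ℝ) : dd v (0 : Fn) = 0 := dd_const v 0

lemma DxDy_eq : Dx + Dy = dd (1, 1) := by
  funext u p
  show fderiv ℝ u p (1,0) + fderiv ℝ u p (0,1) = fderiv ℝ u p (1,1)
  rw [← ContinuousLinearMap.map_add]
  norm_num

lemma Dx_eq : Dx = dd (1, 0) := rfl
lemma Dy_eq : Dy = dd (0, 1) := rfl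

lemma fderiv_sub_fst (s : ℝ) (r : ℝ × ℝ) :
    fderiv ℝ (fun q : ℝ × ℝ => q.1 - s) r = ContinuousLinearMap.fst ℝ ℝ ℝ :=
  ((hasFDerivAt_fst (p := r)).sub_const s).fderiv

lemma fderiv_sub_snd (t : ℝ) (r : ℝ × ℝ) :
    fderiv ℝ (fun q : ℝ × ℝ => q.2 - t) r = ContinuousLinearMap.snd ℝ ℝ ℝ :=
  ((hasFDerivAt_snd (p := r)).sub_const t).fderiv

lemma smooth_sub_fst (s : ℝ) : IsSmooth (fun q : ℝ × ℝ => q.1 - s) :=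
  contDiff_fst.sub contDiff_const

lemma smooth_sub_snd (t : ℝ) : IsSmooth (fun q : ℝ × ℝ => q.2 - t) :=
  contDiff_snd.sub contDiff_const

lemma dd_xf (v : ℝ × ℝ) : dd v xf = fun _ => v.1 := by
  funext p
  have : fderiv ℝ xf p = ContinuousLinearMap.fst ℝ ℝ ℝ := (hasFDerivAt_fst (p := p)).fderiv
  simp [dd, this]

lemma perm2 {α : Type*} {a b x y : α} (h : [a, b].Perm [x, y]) :
    (a = x ∧ b = y) ∨ (a = y ∧ b = x) := by
  have ha : a = x ∨ a = y := by simpa using h.mem_iff.mp (by simp)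
  rcases ha with rfl | rfl
  · left
    refine ⟨rfl, ?_⟩
    have h2 := (List.perm_cons a).mp h
    simpa using h2.mem_iff.mp (by simp)
  · right
    refine ⟨rfl, ?_⟩
    have h' : [a, b].Perm [a, x] := h.trans (List.Perm.swap a x [])
    have h2 := (List.perm_cons a).mp h'
    simpa using h2.mem_iff.mp (by simp)

lemma perm3 {α : Type*} {a b c x y z : α} (h : [a, b, c].Perm [x, y, z]) :
    (a = x ∧ ((b = y ∧ c = z) ∨ (b = z ∧ c = y))) ∨
    (a = y ∧ ((b = x ∧ c = z) ∨ (b = z ∧ c = x))) ∨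
    (a = z ∧ ((b = x ∧ c = y) ∨ (b = y ∧ c = x))) := by
  have ha : a = x ∨ a = y ∨ a = z := by simpa using h.mem_iff.mp (by simp)
  rcases ha with rfl | rfl | rfl
  · exact Or.inl ⟨rfl, perm2 ((List.perm_cons a).mp h)⟩
  · refine Or.inr (Or.inl ⟨rfl, ?_⟩)
    have h' : [a, b, c].Perm [a, x, z] := h.trans (List.Perm.swap a x [z])
    exact perm2 ((List.perm_cons a).mp h')
  · refine Or.inr (Or.inr ⟨rfl, ?_⟩)
    have hs : [x, y, a].Perm [a, x, y] :=
      (List.Perm.cons x (List.Perm.swap a y [])).trans (List.Perm.swap a x [y])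
    have h' : [a, b, c].Perm [a, x, y] := h.trans hs
    exact perm2 ((List.perm_cons a).mp h')

lemma key_eqs {v₁ v₂ v₃ : ℝ × ℝ} {a b c : Fn}
    (ha : IsSmooth a) (hb : IsSmooth b) (hc : IsSmooth c)
    (heq : ∀ u, IsSmooth u → EE v₁ v₂ v₃ a b c u = A3 u) (p : ℝ × ℝ) :
    (c p * (v₁.1 * v₂.1 + v₂.1 * v₁.1) + b p * (v₁.1 * v₃.1 + v₃.1 * v₁.1)
        + a p * (v₂.1 * v₃.1 + v₃.1 * v₂.1) = 0) ∧
    (c p * (v₁.2 * v₂.2 + v₂.2 * v₁.2) + b p * (v₁.2 * v₃.2 + v₃.2 * v₁.2)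
        + a p * (v₂.2 * v₃.2 + v₃.2 * v₂.2) = 0) ∧
    (c p * (v₁.1 * v₂.2 + v₂.1 * v₁.2) + b p * (v₁.1 * v₃.2 + v₃.1 * v₁.2)
        + a p * (v₂.1 * v₃.2 + v₃.1 * v₂.2) = 0) := by
  have hF : ∀ v : ℝ × ℝ, (ContinuousLinearMap.fst ℝ ℝ ℝ) v = v.1 := fun _ => rfl
  have hG : ∀ v : ℝ × ℝ, (ContinuousLinearMap.snd ℝ ℝ ℝ) v = v.2 := fun _ => rfl
  have hfp : (fun q : ℝ × ℝ => q.1 - p.1) p = 0 := by simp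
  have hgp : (fun q : ℝ × ℝ => q.2 - p.2) p = 0 := by simp
  refine ⟨?_, ?_, ?_⟩
  · have h := heq _ (smmulF (smooth_sub_fst p.1) (smooth_sub_fst p.1))
    have h1 := EE_quad (v₁ := v₁) (v₂ := v₂) (v₃ := v₃) ha hb hc
      (smooth_sub_fst p.1) (smooth_sub_fst p.1)
      (fderiv_sub_fst p.1) (fderiv_sub_fst p.1) hfp hfp
    have h2 := A3_quad (p := p) (smooth_sub_fst p.1) (smooth_sub_fst p.1)
      (fderiv_sub_fst p.1) (fderiv_sub_fst p.1) hfp hfp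
    have h3 := congrFun h p
    rw [h1, h2] at h3
    simpa [hF] using h3
  · have h := heq _ (smmulF (smooth_sub_snd p.2) (smooth_sub_snd p.2))
    have h1 := EE_quad (v₁ := v₁) (v₂ := v₂) (v₃ := v₃) ha hb hc
      (smooth_sub_snd p.2) (smooth_sub_snd p.2)
      (fderiv_sub_snd p.2) (fderiv_sub_snd p.2) hgp hgp
    have h2 := A3_quad (p := p) (smooth_sub_snd p.2) (smooth_sub_snd p.2)
      (fderiv_sub_snd p.2) (fderiv_sub_snd p.2) hgp hgp
    have h3 := congrFun h p
    rw [h1, h2] at h3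
    simpa [hG] using h3
  · have h := heq _ (smmulF (smooth_sub_fst p.1) (smooth_sub_snd p.2))
    have h1 := EE_quad (v₁ := v₁) (v₂ := v₂) (v₃ := v₃) ha hb hc
      (smooth_sub_fst p.1) (smooth_sub_snd p.2)
      (fderiv_sub_fst p.1) (fderiv_sub_snd p.2) hfp hgp
    have h2 := A3_quad (p := p) (smooth_sub_fst p.1) (smooth_sub_snd p.2)
      (fderiv_sub_fst p.1) (fderiv_sub_snd p.2) hfp hgp
    have h3 := congrFun h p
    rw [h1, h2] at h3
    simpa [hF, hG] using h3

lemma smooth_xf : IsSmooth xf := contDiff_fst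

lemma final (v₁ v₂ v₃ : ℝ × ℝ) (heq : EE v₁ v₂ v₃ 0 0 0 xf = A3 xf) : False := by
  have hL : EE v₁ v₂ v₃ 0 0 0 xf = 0 := by
    unfold EE
    simp only [zero_mul, add_zero]
    rw [dd_xf v₃, dd_const v₂, dd_zero v₁]
  have e1 : Dy xf = 0 := by
    rw [Dy_eq, dd_xf]
    rfl
  have e2 : Dx xf = fun _ => (1 : ℝ) := by rw [Dx_eq, dd_xf]
  have e3 : Dx (0 : Fn) = 0 := dd_zero (1, 0)
  have e4 : Dy (0 : Fn) = 0 := dd_zero (0, 1)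
  have hA : A3 xf (1, 0) = 1 := by
    unfold A3
    rw [e1, e4, e3, e3, e2]
    simp [xf, yf]
  have h := congrFun heq (1, 0)
  rw [hL, hA] at h
  simpa using h

lemma go (v₁ v₂ v₃ : ℝ × ℝ) (a b c : Fn)
    (ha : IsSmooth a) (hb : IsSmooth b) (hc : IsSmooth c)
    (heq : ∀ u, IsSmooth u → EE v₁ v₂ v₃ a b c u = A3 u)
    (hsolve : ∀ A B C : ℝ,
      C * (v₁.1 * v₂.1 + v₂.1 * v₁.1) + B * (v₁.1 * v₃.1 + v₃.1 * v₁.1)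
          + A * (v₂.1 * v₃.1 + v₃.1 * v₂.1) = 0 →
      C * (v₁.2 * v₂.2 + v₂.2 * v₁.2) + B * (v₁.2 * v₃.2 + v₃.2 * v₁.2)
          + A * (v₂.2 * v₃.2 + v₃.2 * v₂.2) = 0 →
      C * (v₁.1 * v₂.2 + v₂.1 * v₁.2) + B * (v₁.1 * v₃.2 + v₃.1 * v₁.2)
          + A * (v₂.1 * v₃.2 + v₃.1 * v₂.2) = 0 →
      A = 0 ∧ B = 0 ∧ C = 0) : False := by
  have h0 : ∀ p, a p = 0 ∧ b p = 0 ∧ c p = 0 := by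
    intro p
    obtain ⟨e1, e2, e3⟩ := key_eqs ha hb hc heq p
    exact hsolve _ _ _ e1 e2 e3
  have ha0 : a = 0 := funext fun p => (h0 p).1
  have hb0 : b = 0 := funext fun p => (h0 p).2.1
  have hc0 : c = 0 := funext fun p => (h0 p).2.2
  subst ha0; subst hb0; subst hc0
  exact final v₁ v₂ v₃ (heq xf smooth_xf)

/-- `A₃` has no factorization into three first-order factors: there are no smooth
`a, b, c` and no ordering `(P₁, P₂, P₃)` of the three operators `D_x`, `D_y`,
`D_x + D_y` such that `A₃ = (P₁ + a) ∘ (P₂ + b) ∘ (P₃ + c)`. -/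
theorem A3_no_factorization_into_three_first_order_factors :
    ¬ ∃ (P₁ P₂ P₃ : Fn → Fn) (a b c : Fn),
      List.Perm [P₁, P₂, P₃] [Dx, Dy, Dx + Dy] ∧
      IsSmooth a ∧ IsSmooth b ∧ IsSmooth c ∧
      ∀ u : Fn, IsSmooth u →
        (fun v => P₁ v + a * v)
          ((fun v => P₂ v + b * v)
            ((fun v => P₃ v + c * v) u)) = A3 u := by
  rintro ⟨P₁, P₂, P₃, a, b, c, hperm, ha, hb, hc, heq⟩
  rcases perm3 hperm with ⟨h1, (⟨h2, h3⟩ | ⟨h2, h3⟩)⟩ |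
    ⟨h1, (⟨h2, h3⟩ | ⟨h2, h3⟩)⟩ | ⟨h1, (⟨h2, h3⟩ | ⟨h2, h3⟩)⟩ <;>
      subst h1 <;> subst h2 <;> subst h3 <;>
      rw [DxDy_eq, Dx_eq, Dy_eq] at heq
  · exact go (1,0) (0,1) (1,1) a b c ha hb hc (fun u hu => heq u hu)
      (by intro A B C h1 h2 h3; norm_num at h1 h2 h3 ⊢; refine ⟨by linarith, by linarith, by linarith⟩)
  · exact go (1,0) (1,1) (0,1) a b c ha hb hc (fun u hu => heq u hu)
      (by intro A B C h1 h2 h3; norm_num at h1 h2 h3 ⊢; refine ⟨by linarith, by linarith, by linarith⟩)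
  · exact go (0,1) (1,0) (1,1) a b c ha hb hc (fun u hu => heq u hu)
      (by intro A B C h1 h2 h3; norm_num at h1 h2 h3 ⊢; refine ⟨by linarith, by linarith, by linarith⟩)
  · exact go (0,1) (1,1) (1,0) a b c ha hb hc (fun u hu => heq u hu)
      (by intro A B C h1 h2 h3; norm_num at h1 h2 h3 ⊢; refine ⟨by linarith, by linarith, by linarith⟩)
  · exact go (1,1) (1,0) (0,1) a b c ha hb hc (fun u hu => heq u hu)
      (by intro A B C h1 h2 h3; norm_num at h1 h2 h3 ⊢; refine ⟨by linarith, by linarith, by linarith⟩)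
  · exact go (1,1) (0,1) (1,0) a b c ha hb hc (fun u hu => heq u hu)
      (by intro A B C h1 h2 h3; norm_num at h1 h2 h3 ⊢; refine ⟨by linarith, by linarith, by linarith⟩)
end

section
/- Let p, a, b, c, e, f, g, q : ℝ² → ℝ be smooth functions. If (D_x + p) ∘ (D_xy + a·D_x + b·D_y + c) = (D_xx + e·D_x + f·D_y + g) ∘ (D_y + q) as operators on smooth functions ℝ² → ℝ, then c = ∂_x a + a·b and q = a; consequently the second-order middle factor factors as D_xy + a·D_x + b·D_y + c = (D_x + b) ∘ (D_y + a), and the whole operator factors into three first-order factors with left factor D_x + p and right factor D_y + q. -/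
lemma diffAt {u : Fn} (hu : IsSmooth u) (z : ℝ × ℝ) : DifferentiableAt ℝ u z :=
  hu.differentiable (by simp) z

lemma IsSmooth.addF {u v : Fn} (hu : IsSmooth u) (hv : IsSmooth v) : IsSmooth (u + v) := hu.add hv
lemma IsSmooth.mulF {u v : Fn} (hu : IsSmooth u) (hv : IsSmooth v) : IsSmooth (u * v) := hu.mul hv
lemma IsSmooth.dx {u : Fn} (hu : IsSmooth u) : IsSmooth (Dx u) := by
  have h : ContDiff ℝ (⊤ : ℕ∞) (fderiv ℝ u) := hu.fderiv_right (by simp)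
  exact h.clm_apply contDiff_const
lemma IsSmooth.dy {u : Fn} (hu : IsSmooth u) : IsSmooth (Dy u) := by
  have h : ContDiff ℝ (⊤ : ℕ∞) (fderiv ℝ u) := hu.fderiv_right (by simp)
  exact h.clm_apply contDiff_const

lemma Dx_add {u v : Fn} (hu : IsSmooth u) (hv : IsSmooth v) : Dx (u + v) = Dx u + Dx v := by
  funext z
  simp only [Dx, Pi.add_apply]
  rw [fderiv_add (diffAt hu z) (diffAt hv z)]
  simp

lemma Dy_add {u v : Fn} (hu : IsSmooth u) (hv : IsSmooth v) : Dy (u + v) = Dy u + Dy v := by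
  funext z
  simp only [Dy, Pi.add_apply]
  rw [fderiv_add (diffAt hu z) (diffAt hv z)]
  simp

lemma Dx_mul {u v : Fn} (hu : IsSmooth u) (hv : IsSmooth v) : Dx (u * v) = u * Dx v + v * Dx u := by
  funext z
  simp only [Dx, Pi.add_apply, Pi.mul_apply]
  rw [show u * v = fun y => u y * v y from rfl, fderiv_fun_mul (diffAt hu z) (diffAt hv z)]
  simp

lemma Dy_mul {u v : Fn} (hu : IsSmooth u) (hv : IsSmooth v) : Dy (u * v) = u * Dy v + v * Dy u := by
  funext z
  simp only [Dy, Pi.add_apply, Pi.mul_apply]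
  rw [show u * v = fun y => u y * v y from rfl, fderiv_fun_mul (diffAt hu z) (diffAt hv z)]
  simp

lemma Dx_zero : Dx (0 : Fn) = 0 := by
  funext z; simp only [Dx]
  rw [show (0 : Fn) = fun _ => (0:ℝ) from rfl, fderiv_fun_const]; simp
lemma Dy_zero : Dy (0 : Fn) = 0 := by
  funext z; simp only [Dy]
  rw [show (0 : Fn) = fun _ => (0:ℝ) from rfl, fderiv_fun_const]; simp
lemma Dx_one : Dx (1 : Fn) = 0 := by
  funext z; simp [Dx]
lemma Dy_one : Dy (1 : Fn) = 0 := by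
  funext z; simp [Dy]

noncomputable def lP (P : ℝ × ℝ) : Fn := fun z => z.1 - P.1
noncomputable def mP (P : ℝ × ℝ) : Fn := fun z => z.2 - P.2

lemma lP_smooth (P) : IsSmooth (lP P) := (contDiff_fst).sub contDiff_const
lemma mP_smooth (P) : IsSmooth (mP P) := (contDiff_snd).sub contDiff_const
lemma fderiv_lP (P z) : fderiv ℝ (lP P) z = ContinuousLinearMap.fst ℝ ℝ ℝ :=
  ((hasFDerivAt_fst (p := z)).sub_const P.1).fderiv
lemma fderiv_mP (P z) : fderiv ℝ (mP P) z = ContinuousLinearMap.snd ℝ ℝ ℝ :=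
  ((hasFDerivAt_snd (p := z)).sub_const P.2).fderiv
lemma Dx_lP (P) : Dx (lP P) = 1 := by
  funext z; simp [Dx, fderiv_lP]
lemma Dy_lP (P) : Dy (lP P) = 0 := by
  funext z; simp [Dy, fderiv_lP]
lemma Dx_mP (P) : Dx (mP P) = 0 := by
  funext z; simp [Dx, fderiv_mP]
lemma Dy_mP (P) : Dy (mP P) = 1 := by
  funext z; simp [Dy, fderiv_mP]


/-- Key computation for the normalized form `D_x²D_y` with left symbol `X` and right
symbol `Y`: if `(D_x + p) ∘ (D_xy + a·D_x + b·D_y + c) = (D_xx + e·D_x + f·D_y + g) ∘ (D_y + q)`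
on smooth functions, then `c = ∂_x a + a·b` and `q = a`; consequently the middle
second-order factor factors as `(D_x + b) ∘ (D_y + a)` and the whole operator factors
into three first-order factors with left factor `D_x + p` and right factor `D_y + q`. -/
theorem key_computation_X_left_Y_right
    (p a b c e f g q : Fn)
    (hp : IsSmooth p) (ha : IsSmooth a) (hb : IsSmooth b) (hc : IsSmooth c)
    (he : IsSmooth e) (hf : IsSmooth f) (hg : IsSmooth g) (hq : IsSmooth q)
    (heq : ∀ u : Fn, IsSmooth u →
      (fun v => Dx v + p * v)
        (Dx (Dy u) + a * Dx u + b * Dy u + c * u) =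
      (fun v => Dx (Dx v) + e * Dx v + f * Dy v + g * v)
        (Dy u + q * u)) :
    c = Dx a + a * b ∧ q = a ∧
    (∀ u : Fn, IsSmooth u →
      Dx (Dy u) + a * Dx u + b * Dy u + c * u =
        (fun v => Dx v + b * v) ((fun v => Dy v + a * v) u)) ∧
    (∀ u : Fn, IsSmooth u →
      (fun v => Dx v + p * v)
        (Dx (Dy u) + a * Dx u + b * Dy u + c * u) =
      (fun v => Dx v + p * v)
        ((fun v => Dx v + b * v)
          ((fun v => Dy v + q * v) u))) := by
  have h1 : IsSmooth (1 : Fn) := contDiff_const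
  -- Step 1: q = a
  have hqa : q = a := by
    funext P
    obtain ⟨l, hl_def⟩ : ∃ l, l = lP P := ⟨_, rfl⟩
    have hl : IsSmooth l := hl_def ▸ lP_smooth P
    have hDxl : Dx l = 1 := by rw [hl_def, Dx_lP]
    have hDyl : Dy l = 0 := by rw [hl_def, Dy_lP]
    have hl0 : l P = 0 := by rw [hl_def]; simp [lP]
    have hll : IsSmooth (l * l) := hl.mulF hl
    have h2l : IsSmooth (l + l) := hl.addF hl
    have e1 : Dx (l * l) = l + l := by rw [Dx_mul hl hl, hDxl]; funext z; simp
    have e2 : Dy (l * l) = 0 := by rw [Dy_mul hl hl, hDyl]; funext z; simp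
    have hA := heq (l * l) hll
    simp only [] at hA
    simp only [e1, e2, Dx_zero, mul_zero, zero_add, add_zero] at hA
    have E2 : Dx (q * (l * l)) = q * (l + l) + (l * l) * Dx q := by
      rw [Dx_mul hq hll, e1]
    have E1 : Dx (a * (l + l) + c * (l * l)) =
        (a * (Dx l + Dx l) + (l + l) * Dx a) + (c * (l + l) + (l * l) * Dx c) := by
      rw [Dx_add (ha.mulF h2l) (hc.mulF hll), Dx_mul ha h2l, Dx_mul hc hll,
        Dx_add hl hl, e1]
    have E3 : Dx (q * (l + l) + (l * l) * Dx q) =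
        (q * (Dx l + Dx l) + (l + l) * Dx q) + ((l * l) * Dx (Dx q) + Dx q * (l + l)) := by
      rw [Dx_add (hq.mulF h2l) (hll.mulF hq.dx), Dx_mul hq h2l, Dx_add hl hl,
        Dx_mul hll hq.dx, e1]
    have E4 : Dy (q * (l * l)) = q * 0 + (l * l) * Dy q := by
      rw [Dy_mul hq hll, e2]
    rw [E2, E3, E1, E4] at hA
    have hA' := congrFun hA P
    simp only [Pi.add_apply, Pi.mul_apply, Pi.zero_apply, Pi.one_apply, hDxl, hl0,
      mul_zero, zero_mul, add_zero, zero_add, mul_one] at hA'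
    linarith [hA']
  subst hqa
  -- Step 2: c = Dx q + q * b
  have hcab : c = Dx q + q * b := by
    funext P
    obtain ⟨l, hl_def⟩ : ∃ l, l = lP P := ⟨_, rfl⟩
    obtain ⟨m, hm_def⟩ : ∃ m, m = mP P := ⟨_, rfl⟩
    have hl : IsSmooth l := hl_def ▸ lP_smooth P
    have hm : IsSmooth m := hm_def ▸ mP_smooth P
    have hDxl : Dx l = 1 := by rw [hl_def, Dx_lP]
    have hDyl : Dy l = 0 := by rw [hl_def, Dy_lP]
    have hDxm : Dx m = 0 := by rw [hm_def, Dx_mP]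
    have hDym : Dy m = 1 := by rw [hm_def, Dy_mP]
    have hl0 : l P = 0 := by rw [hl_def]; simp [lP]
    have hm0 : m P = 0 := by rw [hm_def]; simp [mP]
    -- Test B : u = l
    have hB := heq l hl
    simp only [] at hB
    simp only [hDyl, hDxl, Dx_zero, mul_zero, mul_one, zero_add, add_zero] at hB
    have E5 : Dx (q + c * l) = Dx q + (c * 1 + l * Dx c) := by
      rw [Dx_add hq (hc.mulF hl), Dx_mul hc hl, hDxl]
    have E6 : Dx (q * l) = q + l * Dx q := by
      rw [Dx_mul hq hl, hDxl, mul_one]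
    have E7 : Dx (q + l * Dx q) = Dx q + (l * Dx (Dx q) + Dx q * 1) := by
      rw [Dx_add hq (hl.mulF hq.dx), Dx_mul hl hq.dx, hDxl]
    have E8 : Dy (q * l) = q * 0 + l * Dy q := by
      rw [Dy_mul hq hl, hDyl]
    rw [E5, E6, E7, E8] at hB
    have hB' := congrFun hB P
    simp only [Pi.add_apply, Pi.mul_apply, Pi.zero_apply, Pi.one_apply, hl0,
      mul_zero, zero_mul, add_zero, zero_add, mul_one] at hB'
    -- Test C : u = l * m
    have hlm : IsSmooth (l * m) := hl.mulF hm
    have eC1 : Dx (l * m) = m := by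
      rw [Dx_mul hl hm, hDxm, hDxl]; funext z; simp
    have eC2 : Dy (l * m) = l := by
      rw [Dy_mul hl hm, hDym, hDyl]; funext z; simp
    have hC := heq (l * m) hlm
    simp only [] at hC
    simp only [eC1, eC2, hDxl] at hC
    have F1 : Dx (1 + q * m + b * l + c * (l * m)) =
        (((0 : Fn) + (q * 0 + m * Dx q)) + (b * 1 + l * Dx b)) + (c * m + (l * m) * Dx c) := by
      rw [Dx_add ((h1.addF (hq.mulF hm)).addF (hb.mulF hl)) (hc.mulF hlm),
        Dx_add (h1.addF (hq.mulF hm)) (hb.mulF hl), Dx_add h1 (hq.mulF hm),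
        Dx_mul hq hm, Dx_mul hb hl, Dx_mul hc hlm, Dx_one, hDxm, hDxl, eC1]
    have F2 : Dx (l + q * (l * m)) = 1 + (q * m + (l * m) * Dx q) := by
      rw [Dx_add hl (hq.mulF hlm), Dx_mul hq hlm, hDxl, eC1]
    have F3 : Dx ((1 : Fn) + (q * m + (l * m) * Dx q)) =
        (0 : Fn) + ((q * 0 + m * Dx q) + ((l * m) * Dx (Dx q) + Dx q * m)) := by
      rw [Dx_add h1 ((hq.mulF hm).addF (hlm.mulF hq.dx)),
        Dx_add (hq.mulF hm) (hlm.mulF hq.dx), Dx_mul hq hm, Dx_mul hlm hq.dx,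
        Dx_one, hDxm, eC1]
    have F4 : Dy (l + q * (l * m)) = (0 : Fn) + (q * l + (l * m) * Dy q) := by
      rw [Dy_add hl (hq.mulF hlm), Dy_mul hq hlm, hDyl, eC2]
    rw [F1, F2, F3, F4] at hC
    have hC' := congrFun hC P
    simp only [Pi.add_apply, Pi.mul_apply, Pi.zero_apply, Pi.one_apply, hl0, hm0,
      mul_zero, zero_mul, add_zero, zero_add, mul_one] at hC'
    simp only [Pi.add_apply, Pi.mul_apply]
    linear_combination hB' - q P * hC'
  have hmid : ∀ u : Fn, IsSmooth u →
      Dx (Dy u) + q * Dx u + b * Dy u + c * u =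
        Dx (Dy u + q * u) + b * (Dy u + q * u) := by
    intro u hu
    rw [Dx_add hu.dy (hq.mulF hu), Dx_mul hq hu, hcab]
    funext z
    simp only [Pi.add_apply, Pi.mul_apply]
    ring
  refine ⟨hcab, rfl, fun u hu => hmid u hu, fun u hu => ?_⟩
  simp only []
  rw [hmid u hu]
end
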